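/- arXiv:2306.12433 — 6 statements merged into one kernel-verified Lean document; each statement's English description precedes it below -/
import Mathlib

section
/- The Fourier transform f ↦ (Π(f))_{Π∈Ĝ}, where Π(f) = Σ_{x∈G} f(x)Π(x), is an algebra isomorphism from the convolution algebra C(G) onto the direct sum ⊕_{Π∈Ĝ} End(V(Π)) over the irreducible representations of the finite group G. -/
/-- A representation is irreducible: the space is nonzero and the only invariant subspaces are
`⊥` and `⊤`. -/
def IsIrreducibleRep {G V : Type*} [Group G] [AddCommGroup V] [Module ℂ V]
    (ρ : Representation ℂ G V) : Prop :=
  Nontrivial V ∧ ∀ U : Submodule ℂ V, (∀ g : G, ∀ v ∈ U, ρ g v ∈ U) → U = ⊥ ∨ U = ⊤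

/-- Equivalence of representations: an invertible intertwining operator exists. -/
def RepEquiv {G V W : Type*} [Group G] [AddCommGroup V] [Module ℂ V]
    [AddCommGroup W] [Module ℂ W]
    (ρ : Representation ℂ G V) (π : Representation ℂ G W) : Prop :=
  ∃ e : V ≃ₗ[ℂ] W, ∀ (g : G) (v : V), e (ρ g v) = π g (e v)

/-!
The representations `ρ i` make the `V i` pairwise non-isomorphic simple `ℂ[G]`-modules.
Surjectivity: by Schur's lemma over the algebraically closed field `ℂ`, every
`ℂ[G]`-endomorphism of `∀ i, V i` is a scalar on each factor and has no off-diagonal part, so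
any family `(T i)` of `ℂ`-linear maps commutes with all of them; the Jacobson density theorem
then realises `(T i)` by the action of an element of `ℂ[G]`.
Injectivity: `ℂ[G]` is semisimple (Maschke), so an element annihilating every simple left ideal
annihilates `ℂ[G]`, hence is `0`; and by completeness each simple left ideal is isomorphic to
some `V i`.
-/
open scoped MonoidAlgebra

section Density

variable {k R ι : Type*} [Field k] [IsAlgClosed k] [Ring R] [Algebra k R]
  {M : ι → Type*} [∀ i, AddCommGroup (M i)] [∀ i, Module R (M i)] [∀ i, Module k (M i)]
  [∀ i, IsScalarTower k R (M i)] [∀ i, IsSimpleModule R (M i)]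
  [∀ i, FiniteDimensional k (M i)]

theorem LinearMap.commute_of_pairwise_isEmpty_linearEquiv
    (hM : Pairwise fun i j ↦ IsEmpty (M i ≃ₗ[R] M j))
    (T : ∀ i, Module.End k (M i)) {i j : ι} (f : M i →ₗ[R] M j) (v : M i) :
    f (T i v) = T j (f v) := by
  obtain rfl | hij := eq_or_ne i j
  · obtain ⟨c, rfl⟩ := (IsSimpleModule.algebraMap_end_bijective_of_isAlgClosed k).2 f
    exact ((T i).map_smul c v).symm
  · obtain rfl : f = 0 := f.bijective_or_eq_zero.resolve_left
      fun hf ↦ (hM hij).false (.ofBijective f hf)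
    simp

theorem LinearMap.pi_map_commute_of_pairwise_isEmpty_linearEquiv [Fintype ι]
    (hM : Pairwise fun i j ↦ IsEmpty (M i ≃ₗ[R] M j))
    (T : ∀ i, Module.End k (M i)) (φ : Module.End R (∀ i, M i)) (m : ∀ i, M i) :
    φ (fun i ↦ T i (m i)) = fun j ↦ T j (φ m j) := by
  classical
  ext j
  conv_lhs => rw [← Finset.univ_sum_single fun i ↦ T i (m i)]
  conv_rhs => rw [← Finset.univ_sum_single m]
  simp only [map_sum, Finset.sum_apply]
  exact Finset.sum_congr rfl fun i _ ↦ commute_of_pairwise_isEmpty_linearEquiv hM T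
    (LinearMap.proj j ∘ₗ φ ∘ₗ LinearMap.single R M i) (m i)

theorem surjective_pi_lsmul_of_pairwise_isEmpty_linearEquiv [Fintype ι]
    (hM : Pairwise fun i j ↦ IsEmpty (M i ≃ₗ[R] M j)) :
    Function.Surjective (AlgHom.pi fun i ↦ Algebra.lsmul k k (A := R) (M i)) := by
  classical
  intro T
  have : Module.Finite (Module.End R (∀ i, M i)) (∀ i, M i) :=
    .of_restrictScalars_finite k _ _
  let Tpi : Module.End (Module.End R (∀ i, M i)) (∀ i, M i) :=
    { toFun m i := T i (m i)
      map_add' m m' := by ext; simp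
      map_smul' φ m := (LinearMap.pi_map_commute_of_pairwise_isEmpty_linearEquiv hM T φ m).symm }
  obtain ⟨r, hr⟩ := Module.Finite.toModuleEnd_moduleEnd_surjective Tpi
  refine ⟨r, funext fun i ↦ LinearMap.ext fun v ↦ ?_⟩
  simpa [Tpi] using congr_fun (LinearMap.congr_fun hr (Pi.single i v)) i

end Density

theorem IsSemisimpleModule.annihilator_eq_iInf_simples (R M : Type*) [Ring R] [AddCommGroup M]
    [Module R M] [IsSemisimpleModule R M] :
    Module.annihilator R M =
      ⨅ S : {S : Submodule R M // IsSimpleModule R S}, Module.annihilator R S.1 := by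
  rw [← Submodule.annihilator_top, ← sSup_simples_eq_top, sSup_eq_iSup',
    Submodule.annihilator_iSup]
  rfl

theorem IsSemisimpleRing.eq_zero_of_forall_mem_annihilator {R : Type*} [Ring R]
    [IsSemisimpleRing R] {a : R}
    (h : ∀ S : Submodule R R, IsSimpleModule R S → a ∈ Module.annihilator R S) : a = 0 := by
  have ha : a ∈ Module.annihilator R R := by
    rw [IsSemisimpleModule.annihilator_eq_iInf_simples, Ideal.mem_iInf]
    exact fun S ↦ h S.1 S.2
  simpa using Module.mem_annihilator.1 ha 1

namespace Representation

variable {G V W : Type*} [Group G] [AddCommGroup V] [Module ℂ V] [AddCommGroup W] [Module ℂ W]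

theorem isIrreducibleRep_iff_isIrreducible (ρ : Representation ℂ G V) :
    IsIrreducibleRep ρ ↔ ρ.IsIrreducible := by
  constructor
  · rintro ⟨_, h⟩
    have : Nontrivial (Subrepresentation ρ) :=
      ⟨⊥, ⊤, fun h ↦ bot_ne_top congr(($h).toSubmodule)⟩
    exact ⟨fun σ ↦ (h σ.toSubmodule σ.apply_mem_toSubmodule).imp
      (fun h ↦ Subrepresentation.toSubmodule_injective h)
      (fun h ↦ Subrepresentation.toSubmodule_injective h)⟩
  · intro h
    refine ⟨?_, fun U hU ↦ ?_⟩
    · refine not_subsingleton_iff_nontrivial.1 fun _ ↦ ?_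
      exact (bot_ne_top : (⊥ : Subrepresentation ρ) ≠ ⊤)
        (Subrepresentation.toSubmodule_injective (Subsingleton.elim _ _))
    · exact (h.eq_bot_or_eq_top ⟨U, hU⟩).imp (congrArg Subrepresentation.toSubmodule)
        (congrArg Subrepresentation.toSubmodule)

theorem isIrreducibleRep_iff_isSimpleModule_asModule (ρ : Representation ℂ G V) :
    IsIrreducibleRep ρ ↔ IsSimpleModule ℂ[G] ρ.asModule := by
  rw [isIrreducibleRep_iff_isIrreducible, irreducible_iff_isSimpleModule_asModule]

theorem repEquiv_iff_nonempty_linearEquiv_asModule (ρ : Representation ℂ G V)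
    (σ : Representation ℂ G W) :
    RepEquiv ρ σ ↔ Nonempty (ρ.asModule ≃ₗ[ℂ[G]] σ.asModule) := by
  constructor
  · rintro ⟨e, he⟩
    let f : IntertwiningMap ρ σ := ⟨e.toLinearMap, fun g ↦ LinearMap.ext (he g)⟩
    exact ⟨.ofBijective (IntertwiningMap.equivLinearMapAsModule ρ σ f) e.bijective⟩
  · rintro ⟨e⟩
    let f := (IntertwiningMap.equivLinearMapAsModule ρ σ).symm e.toLinearMap
    exact ⟨.ofBijective f.toLinearMap e.bijective, f.isIntertwining⟩

variable {k M : Type*} [CommSemiring k] [AddCommMonoid M] [Module k M] [Module k[G] M]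
  [IsScalarTower k k[G] M]

noncomputable def ofModule'AsModuleEquiv :
    (ofModule' (k := k) (G := G) M).asModule ≃ₗ[k[G]] M where
  toFun m := m
  invFun m := m
  map_add' _ _ := rfl
  map_smul' r m := by
    change (ofModule' (k := k) M).asAlgebraHom r m = r • (show M from m)
    simp [asAlgebraHom, ofModule']
  left_inv _ := rfl
  right_inv _ := rfl

theorem asAlgebraHom_eq_sum {k G V : Type*} [CommSemiring k] [Monoid G] [Fintype G]
    [AddCommMonoid V] [Module k V] (ρ : Representation k G V) (f : k[G]) :
    ρ.asAlgebraHom f = ∑ x : G, f.coeff x • ρ x := by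
  rw [asAlgebraHom_def, MonoidAlgebra.lift_apply, Finsupp.sum_fintype]
  exact fun _ ↦ zero_smul _ _

end Representation

section Completeness

open Representation

variable {G ι : Type} [Group G] {V : ι → Type} [∀ i, AddCommGroup (V i)]
  [∀ i, Module ℂ (V i)]
  {ρ : ∀ i, Representation ℂ G (V i)}

theorem exists_nonempty_linearEquiv_asModule
    (hcomplete : ∀ (W : Type) [AddCommGroup W] [Module ℂ W] [FiniteDimensional ℂ W]
      (π : Representation ℂ G W), IsIrreducibleRep π → ∃ i, RepEquiv π (ρ i))
    (M : Type) [AddCommGroup M] [Module ℂ M] [Module ℂ[G] M] [IsScalarTower ℂ ℂ[G] M]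
    [FiniteDimensional ℂ M] [IsSimpleModule ℂ[G] M] :
    ∃ i, Nonempty (M ≃ₗ[ℂ[G]] (ρ i).asModule) := by
  let e := ofModule'AsModuleEquiv (k := ℂ) (G := G) (M := M)
  have : IsSimpleModule ℂ[G] (ofModule' (k := ℂ) (G := G) M).asModule := .congr e
  obtain ⟨i, hi⟩ :=
    hcomplete M (ofModule' M) ((isIrreducibleRep_iff_isSimpleModule_asModule _).2 this)
  obtain ⟨f⟩ := (repEquiv_iff_nonempty_linearEquiv_asModule _ _).1 hi
  exact ⟨i, ⟨e.symm.trans f⟩⟩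

theorem injective_pi_asAlgebraHom [Fintype G]
    (hcomplete : ∀ (W : Type) [AddCommGroup W] [Module ℂ W] [FiniteDimensional ℂ W]
      (π : Representation ℂ G W), IsIrreducibleRep π → ∃ i, RepEquiv π (ρ i)) :
    Function.Injective (AlgHom.pi fun i ↦ (ρ i).asAlgebraHom) := by
  refine (injective_iff_map_eq_zero _).2 fun a ha ↦
    IsSemisimpleRing.eq_zero_of_forall_mem_annihilator fun S _ ↦ ?_
  obtain ⟨i, ⟨e⟩⟩ := exists_nonempty_linearEquiv_asModule hcomplete S
  rw [e.annihilator_eq, Module.mem_annihilator]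
  exact fun v ↦ LinearMap.congr_fun (congr_fun ha i) v

end Completeness

/-- The Fourier transform `f ↦ (Π(f))_{Π ∈ Ĝ}`, `Π(f) = ∑_x f(x) Π(x)`, is an algebra
isomorphism from the convolution algebra `C(G)` onto `⊕_{Π ∈ Ĝ} End(V(Π))`, where
`(ρ i)_{i ∈ ι}` is a complete set of representatives of the irreducible complex
representations of the finite group `G`. -/
theorem fourier_transform_alg_iso (G : Type) [Group G] [Fintype G]
    (ι : Type) [Fintype ι] (V : ι → Type)
    [∀ i, AddCommGroup (V i)] [∀ i, Module ℂ (V i)] [∀ i, FiniteDimensional ℂ (V i)]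
    (ρ : ∀ i, Representation ℂ G (V i))
    (hirr : ∀ i, IsIrreducibleRep (ρ i))
    (hdist : ∀ i j, i ≠ j → ¬ RepEquiv (ρ i) (ρ j))
    (hcomplete : ∀ (W : Type) [AddCommGroup W] [Module ℂ W] [FiniteDimensional ℂ W]
      (π : Representation ℂ G W), IsIrreducibleRep π → ∃ i, RepEquiv π (ρ i)) :
    ∃ e : MonoidAlgebra ℂ G ≃ₐ[ℂ] (∀ i, Module.End ℂ (V i)),
      ∀ (f : MonoidAlgebra ℂ G) (i : ι), e f i = ∑ x : G, f.coeff x • ρ i x := by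
  have (i : ι) : IsSimpleModule ℂ[G] (ρ i).asModule :=
    (Representation.isIrreducibleRep_iff_isSimpleModule_asModule _).1 (hirr i)
  have hnoniso : Pairwise fun i j ↦ IsEmpty ((ρ i).asModule ≃ₗ[ℂ[G]] (ρ j).asModule) :=
    fun i j hij ↦ not_nonempty_iff.1 fun he ↦
      hdist i j hij ((Representation.repEquiv_iff_nonempty_linearEquiv_asModule _ _).2 he)
  have hbij : Function.Bijective (AlgHom.pi fun i ↦ (ρ i).asAlgebraHom) :=
    ⟨injective_pi_asAlgebraHom hcomplete,
      surjective_pi_lsmul_of_pairwise_isEmpty_linearEquiv hnoniso⟩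
  exact ⟨.ofBijective _ hbij, fun f i ↦ (ρ i).asAlgebraHom_eq_sum f⟩
end

section
/- Fourier inversion for finite groups: for every f : G → ℂ and every x ∈ G, f(x) = (1/|G|) Σ_{Π∈Ĝ} d_Π · tr(Π(x⁻¹) · Π(f)), where Π(f) = Σ_{y∈G} f(y)Π(y). -/
/-!
Both sides are linear in `f`, so the formula reduces to `∑ᵢ dᵢ χᵢ(g) = |G| δ_{g,1}`, i.e. to the
claim that `∑ᵢ dᵢ χᵢ` is the character of the left regular representation. By Maschke's theorem
and induction on the dimension, every character is a linear combination of the `χᵢ`, and by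
orthogonality of irreducible characters the coefficient of `χⱼ` in the regular character is
`|G|⁻¹ ∑_g χ_reg(g) χⱼ(g⁻¹) = χⱼ(1) = dⱼ`.
-/

open Module Representation

theorem LinearMap.trace_eq_trace_restrict_add_trace_restrict {R M : Type*} [CommRing R]
    [AddCommGroup M] [Module R M] {p q : Submodule R M} [Module.Free R p] [Module.Finite R p]
    [Module.Free R q] [Module.Finite R q] (hpq : IsCompl p q) {f : M →ₗ[R] M}
    (hp : Set.MapsTo f p p) (hq : Set.MapsTo f q q) :
    trace R M f = trace R p (f.restrict hp) + trace R q (f.restrict hq) := by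
  let A : Bool → Submodule R M := fun b => cond b p q
  have : ∀ b, Module.Free R (A b) := fun b => by cases b <;> assumption
  have : ∀ b, Module.Finite R (A b) := fun b => by cases b <;> assumption
  have hA : DirectSum.IsInternal A :=
    (DirectSum.isInternal_submodule_iff_isCompl A (i := true) (j := false) (by decide)
      (by ext b; cases b <;> simp)).mpr hpq
  rw [trace_eq_sum_trace_restrict hA (f := f) fun b => by cases b <;> assumption, Fintype.sum_bool]
  rfl

theorem Representation.trace_comp_sum_smul {k G V : Type*} [Field k] [Monoid G] [Fintype G]
    [AddCommGroup V] [Module k V] (ρ : Representation k G V) (f : G → k) (x : G) :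
    LinearMap.trace k V (ρ x ∘ₗ ∑ y, f y • ρ y) = ∑ y, f y * ρ.character (x * y) := by
  simp [← Module.End.mul_eq_comp, Finset.mul_sum, character]

open scoped MonoidAlgebra in
theorem Representation.character_leftRegular {G : Type*} [Group G] [Fintype G] [DecidableEq G]
    (g : G) : (leftRegular ℂ G).character g = if g = 1 then (Fintype.card G : ℂ) else 0 := by
  rw [character, LinearMap.trace_eq_matrix_trace ℂ (MonoidAlgebra.basis G ℂ), Matrix.trace]
  simp only [Matrix.diag, LinearMap.toMatrix_apply, MonoidAlgebra.basis_apply,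
    ofMulAction_single, smul_eq_mul]
  change ∑ x, Finsupp.single (g * x) (1 : ℂ) x = _
  simp [Finsupp.single_apply]

section Bridge

variable {G V W : Type*} [Group G] [AddCommGroup V] [Module ℂ V] [AddCommGroup W] [Module ℂ W]
  {ρ : Representation ℂ G V} {σ : Representation ℂ G W}

theorem IsIrreducibleRep.isIrreducible (h : IsIrreducibleRep ρ) : ρ.IsIrreducible where
  exists_pair_ne :=
    have := h.1
    ⟨⊥, ⊤, fun hbt => bot_ne_top (congrArg Subrepresentation.toSubmodule hbt)⟩
  eq_bot_or_eq_top S :=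
    (h.2 S.toSubmodule S.apply_mem_toSubmodule).imp
      (fun hS => Subrepresentation.toSubmodule_injective hS)
      (fun hS => Subrepresentation.toSubmodule_injective hS)

theorem repEquiv_iff_nonempty_equiv : RepEquiv ρ σ ↔ Nonempty (ρ.Equiv σ) :=
  ⟨fun ⟨e, he⟩ => ⟨.mk e fun g => LinearMap.ext (he g)⟩,
    fun ⟨φ⟩ => ⟨φ.toLinearEquiv, φ.toIntertwiningMap.isIntertwining⟩⟩

end Bridge

namespace Subrepresentation

variable {G V : Type*} [Group G] [AddCommGroup V] [Module ℂ V] {ρ : Representation ℂ G V}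

theorem isIrreducibleRep_of_isAtom {S : Subrepresentation ρ} (hS : IsAtom S) :
    IsIrreducibleRep S.toRepresentation := by
  have hinj := Submodule.map_injective_of_injective S.toSubmodule.injective_subtype
  refine ⟨Submodule.nontrivial_iff_ne_bot.mpr fun h => hS.1 (toSubmodule_injective h),
    fun U hU => ?_⟩
  let T : Subrepresentation ρ := ⟨U.map S.toSubmodule.subtype, fun g => by
    rintro _ ⟨u, hu, rfl⟩
    exact ⟨_, hU g u hu, rfl⟩⟩
  rcases hS.le_iff.mp (show T ≤ S by rintro _ ⟨u, -, rfl⟩; exact u.2) with hT | hT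
  · exact Or.inl (hinj ((congrArg toSubmodule hT).trans (Submodule.map_bot _).symm))
  · exact Or.inr (hinj ((congrArg toSubmodule hT).trans (Submodule.map_subtype_top _).symm))

theorem exists_isIrreducibleRep [FiniteDimensional ℂ V] [Nontrivial V]
    (ρ : Representation ℂ G V) : ∃ S : Subrepresentation ρ, IsIrreducibleRep S.toRepresentation := by
  have : WellFoundedLT (Subrepresentation ρ) :=
    StrictMono.wellFoundedLT (f := toSubmodule) fun _ _ h => h
  have : IsAtomic (Subrepresentation ρ) := isAtomic_of_orderBot_wellFounded_lt wellFounded_lt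
  obtain ⟨S, hS, -⟩ := (eq_bot_or_exists_atom_le (⊤ : Subrepresentation ρ)).resolve_left
    fun h => bot_ne_top (congrArg toSubmodule h).symm
  exact ⟨S, isIrreducibleRep_of_isAtom hS⟩

theorem isCompl_toSubmodule {S Q : Subrepresentation ρ} (h : IsCompl S Q) :
    IsCompl S.toSubmodule Q.toSubmodule :=
  ⟨disjoint_iff.mpr (congrArg toSubmodule (disjoint_iff.mp h.1)),
    codisjoint_iff.mpr (congrArg toSubmodule (codisjoint_iff.mp h.2))⟩

theorem character_eq_add_of_isCompl [FiniteDimensional ℂ V] {S Q : Subrepresentation ρ}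
    (h : IsCompl S Q) :
    ρ.character = S.toRepresentation.character + Q.toRepresentation.character :=
  funext fun _ => LinearMap.trace_eq_trace_restrict_add_trace_restrict (isCompl_toSubmodule h)
    (S.apply_mem_toSubmodule _) (Q.apply_mem_toSubmodule _)

end Subrepresentation

section CompleteFamily

variable {G : Type*} [Group G] [Fintype G] {ι : Type*} {V : ι → Type*}
  [∀ i, AddCommGroup (V i)] [∀ i, Module ℂ (V i)] {ρ : ∀ i, Representation ℂ G (V i)}

theorem sum_character_mul_character_inv [DecidableEq ι] [∀ i, FiniteDimensional ℂ (V i)]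
    (hirr : ∀ i, IsIrreducibleRep (ρ i)) (hdist : ∀ i j, i ≠ j → ¬ RepEquiv (ρ i) (ρ j))
    (i j : ι) :
    ∑ g : G, (ρ i).character g * (ρ j).character g⁻¹ =
      if i = j then (Fintype.card G : ℂ) else 0 := by
  have := (hirr i).isIrreducible
  have := (hirr j).isIrreducible
  have hG : (Nat.card G : ℂ) ≠ 0 := NeZero.ne _
  have : Invertible (Nat.card G : ℂ) := invertibleOfNonzero hG
  have h := char_orthonormal (ρ i) (ρ j)
  rw [inv_mul_eq_iff_eq_mul₀ hG] at h
  rw [h, Nat.card_eq_fintype_card]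
  by_cases hij : i = j
  · subst hij
    simp [show Nonempty ((ρ i).Equiv (ρ i)) from ⟨.refl _⟩]
  · have : ¬ Nonempty ((ρ j).Equiv (ρ i)) := fun h =>
      hdist j i (Ne.symm hij) (repEquiv_iff_nonempty_equiv.mpr h)
    simp [hij, this]

theorem sum_sum_smul_character_mul_character_inv [Fintype ι] [DecidableEq ι]
    [∀ i, FiniteDimensional ℂ (V i)] (hirr : ∀ i, IsIrreducibleRep (ρ i))
    (hdist : ∀ i j, i ≠ j → ¬ RepEquiv (ρ i) (ρ j)) (c : ι → ℂ) (j : ι) :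
    ∑ g : G, (∑ i, c i • (ρ i).character) g * (ρ j).character g⁻¹ = Fintype.card G * c j :=
  calc ∑ g : G, (∑ i, c i • (ρ i).character) g * (ρ j).character g⁻¹
      _ = ∑ i, c i * ∑ g : G, (ρ i).character g * (ρ j).character g⁻¹ := by
        simp only [Finset.sum_apply, Pi.smul_apply, smul_eq_mul, Finset.sum_mul, Finset.mul_sum,
          mul_assoc]
        exact Finset.sum_comm
      _ = ∑ i, c i * if i = j then (Fintype.card G : ℂ) else 0 := by
        simp only [sum_character_mul_character_inv hirr hdist]
      _ = Fintype.card G * c j := by simp [mul_comm]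

theorem character_mem_span_range_character
    (hcomplete : ∀ (W : Type) [AddCommGroup W] [Module ℂ W] [FiniteDimensional ℂ W]
      (π : Representation ℂ G W), IsIrreducibleRep π → ∃ i, RepEquiv π (ρ i))
    {W : Type} [AddCommGroup W] [Module ℂ W] [FiniteDimensional ℂ W]
    (π : Representation ℂ G W) :
    π.character ∈ Submodule.span ℂ (Set.range fun i => (ρ i).character) := by
  induction hn : finrank ℂ W using Nat.strong_induction_on generalizing W with
  | _ n ih =>
  rcases subsingleton_or_nontrivial W with hW | hW
  · have : π.character = 0 := funext fun g => by simp [character, Subsingleton.elim (π g) 0]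
    exact this ▸ Submodule.zero_mem _
  obtain ⟨S, hS⟩ := Subrepresentation.exists_isIrreducibleRep π
  obtain ⟨Q, hSQ⟩ := exists_isCompl S
  obtain ⟨i, hi⟩ := hcomplete _ S.toRepresentation hS
  have hQ : finrank ℂ Q.toSubmodule < n := by
    have := hS.1
    have := Submodule.finrank_add_eq_of_isCompl (Subrepresentation.isCompl_toSubmodule hSQ)
    have := finrank_pos (R := ℂ) (M := S.toSubmodule)
    omega
  rw [Subrepresentation.character_eq_add_of_isCompl hSQ]
  refine add_mem ?_ (ih _ hQ Q.toRepresentation rfl)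
  rw [char_iso (repEquiv_iff_nonempty_equiv.mp hi).some]
  exact Submodule.subset_span ⟨i, rfl⟩

end CompleteFamily

theorem sum_finrank_mul_character {G : Type} [Group G] [Fintype G] [DecidableEq G]
    {ι : Type*} [Fintype ι] {V : ι → Type*} [∀ i, AddCommGroup (V i)] [∀ i, Module ℂ (V i)]
    [∀ i, FiniteDimensional ℂ (V i)] {ρ : ∀ i, Representation ℂ G (V i)}
    (hirr : ∀ i, IsIrreducibleRep (ρ i)) (hdist : ∀ i j, i ≠ j → ¬ RepEquiv (ρ i) (ρ j))
    (hcomplete : ∀ (W : Type) [AddCommGroup W] [Module ℂ W] [FiniteDimensional ℂ W]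
      (π : Representation ℂ G W), IsIrreducibleRep π → ∃ i, RepEquiv π (ρ i))
    (g : G) :
    ∑ i, (finrank ℂ (V i) : ℂ) * (ρ i).character g =
      if g = 1 then (Fintype.card G : ℂ) else 0 := by
  classical
  obtain ⟨c, hc⟩ := (Submodule.mem_span_range_iff_exists_fun ℂ).mp
    (character_mem_span_range_character hcomplete (leftRegular ℂ G))
  have hG : (Fintype.card G : ℂ) ≠ 0 := Nat.cast_ne_zero.mpr Fintype.card_ne_zero
  have hcoeff : ∀ j, c j = finrank ℂ (V j) := fun j => by
    have := sum_sum_smul_character_mul_character_inv hirr hdist c j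
    simp only [hc, character_leftRegular, ite_mul, zero_mul, Finset.sum_ite_eq', Finset.mem_univ,
      if_true, inv_one, char_one] at this
    exact (mul_left_cancel₀ hG this).symm
  rw [← character_leftRegular, ← hc]
  simp [hcoeff]

/-- Fourier inversion for finite groups: for every `f : G → ℂ` and `x ∈ G`,
`f x = (1/|G|) ∑_{Π ∈ Ĝ} d_Π · tr(Π(x⁻¹) Π(f))`, where `Π(f) = ∑_y f(y) Π(y)` and the sum runs
over a complete set of representatives of the irreducible complex representations of `G`. -/
theorem fourier_inversion (G : Type) [Group G] [Fintype G]
    (ι : Type) [Fintype ι] (V : ι → Type)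
    [∀ i, AddCommGroup (V i)] [∀ i, Module ℂ (V i)] [∀ i, FiniteDimensional ℂ (V i)]
    (ρ : ∀ i, Representation ℂ G (V i))
    (hirr : ∀ i, IsIrreducibleRep (ρ i))
    (hdist : ∀ i j, i ≠ j → ¬ RepEquiv (ρ i) (ρ j))
    (hcomplete : ∀ (W : Type) [AddCommGroup W] [Module ℂ W] [FiniteDimensional ℂ W]
      (π : Representation ℂ G W), IsIrreducibleRep π → ∃ i, RepEquiv π (ρ i))
    (f : G → ℂ) (x : G) :
    f x = (Fintype.card G : ℂ)⁻¹ *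
      ∑ i, (Module.finrank ℂ (V i) : ℂ) *
        LinearMap.trace ℂ (V i) (ρ i x⁻¹ ∘ₗ (∑ y : G, f y • ρ i y)) := by
  classical
  calc f x = (Fintype.card G : ℂ)⁻¹ *
        ∑ y, f y * if x⁻¹ * y = 1 then (Fintype.card G : ℂ) else 0 := by
        simp only [inv_mul_eq_one, mul_ite, mul_zero, Finset.sum_ite_eq, Finset.mem_univ, if_true]
        field_simp
    _ = (Fintype.card G : ℂ)⁻¹ *
        ∑ y, f y * ∑ i, (finrank ℂ (V i) : ℂ) * (ρ i).character (x⁻¹ * y) := by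
        simp only [sum_finrank_mul_character hirr hdist hcomplete]
    _ = _ := by
        simp only [trace_comp_sum_smul, Finset.mul_sum]
        rw [Finset.sum_comm]
        exact Finset.sum_congr rfl fun i _ => Finset.sum_congr rfl fun y _ => by ring
end

section
/- For a finite group G and an irreducible complex representation Π of dimension d_Π, the integer |G|/d_Π is a (rational) algebraic integer, hence d_Π divides |G|. -/
/-! The operator `T = ∑ g, χ(g⁻¹) • ρ g` commutes with `ρ` because `χ` is a class function, so by
Schur's lemma it is a scalar `μ`; taking traces and using `∑ g, χ(g) χ(g⁻¹) = |G|` gives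
`μ = |G| / d`. The coefficients `χ(g⁻¹)` are algebraic integers (sums of roots of unity), and over
the ring `S` of algebraic integers the `S`-span of `ρ(G)` is a subalgebra of `End V` that is a
finitely generated `S`-module. Hence `T`, and with it `μ`, is integral over `S`, hence over `ℤ`.
Finally, a rational algebraic integer is an integer. -/

open Module

theorem IsIrreducibleRep.isIrreducible_s7 {G V : Type*} [Group G] [AddCommGroup V] [Module ℂ V]
    {ρ : Representation ℂ G V} (hρ : IsIrreducibleRep ρ) : ρ.IsIrreducible := by
  obtain ⟨hV, hinv⟩ := hρ
  refine { exists_pair_ne := ⟨⊥, ⊤, fun h => bot_ne_top (congrArg Subrepresentation.toSubmodule h)⟩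
           eq_bot_or_eq_top := fun W => ?_ }
  exact (hinv W.toSubmodule fun g v hv => W.apply_mem_toSubmodule g hv).imp
    (fun h => Subrepresentation.toSubmodule_injective h)
    (fun h => Subrepresentation.toSubmodule_injective h)

theorem Module.End.isIntegral_trace_of_pow_eq_one {K V : Type*} [Field K] [IsAlgClosed K]
    [AddCommGroup V] [Module K V] [FiniteDimensional K V] {f : End K V} {n : ℕ}
    (hn : n ≠ 0) (hf : f ^ n = 1) : IsIntegral ℤ (LinearMap.trace K V f) := by
  rw [Module.End.trace_eq_sum_roots_charpoly_of_splits (IsAlgClosed.splits _)]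
  refine IsIntegral.multiset_sum fun μ hμ => ?_
  obtain ⟨v, hv⟩ := ((Module.End.hasEigenvalue_iff_isRoot_charpoly f μ).2
    (Polynomial.isRoot_of_mem_roots hμ)).exists_hasEigenvector
  have hμn : μ ^ n = 1 := by
    have hv' := hv.pow_apply n
    rw [hf, Module.End.one_apply] at hv'
    exact smul_left_injective K hv.2 (by simpa using hv'.symm)
  exact IsIntegral.of_pow (Nat.pos_of_ne_zero hn) (hμn ▸ isIntegral_one)

theorem MonoidHom.isIntegral_of_mem_span_range {R B M : Type*} [CommRing R] [Ring B] [Algebra R B]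
    [Monoid M] [Finite M] (φ : M →* B) {x : B} (hx : x ∈ Submodule.span R (Set.range φ)) :
    IsIntegral R x := by
  have hspan : Subalgebra.toSubmodule (Algebra.adjoin R (Set.range φ)) =
      Submodule.span R (Set.range φ) := by
    rw [Algebra.adjoin_eq_span, ← MonoidHom.coe_mrange, Submonoid.closure_eq]
  refine IsIntegral.of_mem_of_fg _ ?_ x (show x ∈ Subalgebra.toSubmodule _ from hspan ▸ hx)
  exact hspan ▸ Submodule.fg_span (Set.finite_range φ)

theorem Nat.dvd_of_isIntegral_div {K : Type*} [Field K] [CharZero K] {a b : ℕ} (hb : b ≠ 0)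
    (h : IsIntegral ℤ ((a : K) / b)) : b ∣ a := by
  have hq : IsIntegral ℤ ((a : ℚ) / b) :=
    (isIntegral_algebraMap_iff (algebraMap ℚ K).injective).1 (by simpa using h)
  obtain ⟨y, hy⟩ := IsIntegrallyClosed.isIntegral_iff.1 hq
  have hyb : y * b = a := by
    have : (y : ℚ) * b = a := by
      rw [eq_intCast] at hy
      rw [hy, div_mul_cancel₀]
      exact_mod_cast hb
    exact_mod_cast this
  exact Int.natCast_dvd_natCast.1 ⟨y, by rw [← hyb, mul_comm]⟩

namespace Representation

theorem commute_sum_smul_of_conj_invariant {k G V : Type*} [CommSemiring k] [Group G] [Fintype G]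
    [AddCommMonoid V] [Module k V] (ρ : Representation k G V) {f : G → k}
    (hf : ∀ g h, f (h * g * h⁻¹) = f g) (h : G) : Commute (ρ h) (∑ g, f g • ρ g) := by
  simp only [Commute, SemiconjBy, Finset.mul_sum, Finset.sum_mul, mul_smul_comm, smul_mul_assoc]
  refine Fintype.sum_equiv (MulAut.conj h).toEquiv _ _ fun g => ?_
  simp only [MulEquiv.toEquiv_eq_coe, EquivLike.coe_coe, MulAut.conj_apply, hf, ← map_mul,
    inv_mul_cancel_right]

variable {k G V : Type*} [Field k] [IsAlgClosed k] [AddCommGroup V] [Module k V]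
  [FiniteDimensional k V]

theorem isIntegral_character [Group G] [Finite G] (ρ : Representation k G V) (g : G) :
    IsIntegral ℤ (ρ.character g) :=
  Module.End.isIntegral_trace_of_pow_eq_one Nat.card_pos.ne'
    (by rw [← map_pow, pow_card_eq_one', map_one])

namespace IsIrreducible

theorem exists_eq_algebraMap [Monoid G] {ρ : Representation k G V} [ρ.IsIrreducible]
    {f : End k V} (hf : ∀ g, Commute (ρ g) f) : ∃ μ : k, f = algebraMap k (End k V) μ := by
  obtain ⟨μ, hμ⟩ := algebraMap_intertwiningMap_bijective_of_isAlgClosed.2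
    (f.intertwiningMap_of_isIntertwiningMap ρ ρ fun g v => (LinearMap.congr_fun (hf g) v).symm)
  exact ⟨μ, LinearMap.ext fun v => (DFunLike.congr_fun hμ v).symm⟩

variable [Group G] [Fintype G] [CharZero k]

theorem sum_character_mul_character_inv (ρ : Representation k G V) [ρ.IsIrreducible] :
    ∑ g, ρ.character g * ρ.character g⁻¹ = Fintype.card G := by
  have : Invertible (Nat.card G : k) := invertibleOfNonzero (by simp)
  have h := char_orthonormal ρ ρ
  rw [if_pos ⟨Equiv.refl ρ⟩, inv_mul_eq_one₀ (by simp)] at h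
  rw [← h, Nat.card_eq_fintype_card]

theorem isIntegral_card_div_finrank (ρ : Representation k G V) [ρ.IsIrreducible] :
    IsIntegral ℤ ((Fintype.card G : k) / finrank k V) := by
  obtain ⟨μ, hμ⟩ := exists_eq_algebraMap <|
    commute_sum_smul_of_conj_invariant ρ (f := fun g => ρ.character g⁻¹) fun g h => by
      rw [mul_inv_rev, mul_inv_rev, inv_inv, ← mul_assoc, char_conj]
  have hμd : μ * finrank k V = Fintype.card G := by
    have h := congrArg (LinearMap.trace k V) hμ
    rw [Algebra.algebraMap_eq_smul_one, map_smul, LinearMap.trace_one, smul_eq_mul] at h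
    rw [← h, ← sum_character_mul_character_inv ρ, map_sum]
    simp only [map_smul, smul_eq_mul, character, mul_comm]
  have hd : (finrank k V : k) ≠ 0 :=
    right_ne_zero_of_mul (hμd ▸ Nat.cast_ne_zero.2 Fintype.card_ne_zero)
  have : Nontrivial V :=
    Module.nontrivial_of_finrank_pos (Nat.pos_of_ne_zero (by exact_mod_cast hd))
  rw [← hμd, mul_div_cancel_right₀ _ hd]
  let S := integralClosure ℤ k
  have hT : IsIntegral S (∑ g, ρ.character g⁻¹ • ρ g) :=
    ρ.isIntegral_of_mem_span_range <| Submodule.sum_mem _ fun g _ =>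
      Submodule.smul_mem _ (⟨_, isIntegral_character ρ g⁻¹⟩ : S) (Submodule.subset_span ⟨g, rfl⟩)
  rw [hμ, isIntegral_algebraMap_iff (algebraMap k (End k V)).injective] at hT
  exact isIntegral_trans μ hT

end IsIrreducible

end Representation

/-- For a finite group `G` and an irreducible complex representation `ρ` of dimension `d`,
the quotient `|G|/d` is an algebraic integer, hence `d` divides `|G|`. -/
theorem degree_dvd_card (G : Type*) [Group G] [Fintype G]
    (V : Type*) [AddCommGroup V] [Module ℂ V] [FiniteDimensional ℂ V]
    (ρ : Representation ℂ G V) (hρ : IsIrreducibleRep ρ) :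
    IsIntegral ℤ ((Fintype.card G : ℂ) / (Module.finrank ℂ V : ℂ)) ∧
      Module.finrank ℂ V ∣ Fintype.card G := by
  have : ρ.IsIrreducible := hρ.isIrreducible_s7
  have : Nontrivial V := hρ.1
  have h := Representation.IsIrreducible.isIntegral_card_div_finrank ρ
  exact ⟨h, Nat.dvd_of_isIntegral_div finrank_pos.ne' h⟩
end

section
/- Mackey's restriction formula for class functions: with G finite, Γ₁, Γ₂ ≤ G, and a set S of double coset representatives of Γ₁\G/Γ₂, for any class function φ on Γ₂ one has Res_{Γ₁}(Ind_{Γ₂}^G φ) = Σ_{s∈S} Ind_{Γ₂(s)→Γ₁} φ_s, where Γ₂(s) = sΓ₂s⁻¹ ∩ Γ₁ and φ_s(γ) = φ(s⁻¹γs). -/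
/-!
Sum the induction formula over `y⁻¹` and split `G` into the double cosets `Γ₁ s Γ₂`. The summand
`g ↦ φ(g⁻¹ γ₁ g)` is right `Γ₂`-invariant because `φ` is a class function, so its sum over
`Γ₁ s Γ₂` can be computed on the parametrisation `(a, b) ↦ a s b` by `Γ₁ × Γ₂`, each of whose
fibres is a copy of `Γ₁ ∩ s Γ₂ s⁻¹`.
-/

open scoped Classical

/-- Induction of class functions: `(indCF Γ φ)(x) = (1/|Γ|) ∑_{y ∈ G, yxy⁻¹ ∈ Γ} φ(yxy⁻¹)`. -/
noncomputable def indCF {G : Type*} [Group G] [Fintype G] (Γ : Subgroup G) [Fintype Γ]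
    (φ : Γ → ℂ) (x : G) : ℂ :=
  (Fintype.card Γ : ℂ)⁻¹ * ∑ y : G, if h : y * x * y⁻¹ ∈ Γ then φ ⟨y * x * y⁻¹, h⟩ else 0

open DoubleCoset

section DoubleCosetSums

variable {G : Type*} [Group G] [Fintype G] (Γ₁ Γ₂ : Subgroup G)

theorem sum_eq_sum_sum_doubleCoset {M : Type*} [AddCommMonoid M] {S : Finset G}
    (hS : ∀ g : G, ∃! s, s ∈ S ∧ g ∈ doubleCoset s Γ₁ Γ₂) (f : G → M) :
    ∑ g, f g = ∑ s ∈ S, ∑ g with g ∈ doubleCoset s Γ₁ Γ₂, f g := by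
  simp only [Finset.sum_filter]
  rw [Finset.sum_comm]
  refine Finset.sum_congr rfl fun g _ => ?_
  obtain ⟨s, ⟨hsS, hgs⟩, hunique⟩ := hS g
  rw [Finset.sum_eq_single_of_mem s hsS fun t htS hts => if_neg fun hgt => hts (hunique t ⟨htS, hgt⟩),
    if_pos hgs]

def doubleCosetFiberEquiv (s : G) {a₀ b₀ : G} (ha₀ : a₀ ∈ Γ₁) (hb₀ : b₀ ∈ Γ₂) :
    {p : Γ₁ × Γ₂ // (p.1 : G) * s * p.2 = a₀ * s * b₀} ≃ {g : G // g ∈ Γ₁ ∧ s⁻¹ * g * s ∈ Γ₂} where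
  toFun p := ⟨a₀⁻¹ * p.1.1, mul_mem (inv_mem ha₀) p.1.1.2, by
    have hconj : s⁻¹ * (a₀⁻¹ * p.1.1) * s = s⁻¹ * a₀⁻¹ * (p.1.1 * s * p.1.2) * (p.1.2 : G)⁻¹ := by
      group
    rw [hconj, p.2, show s⁻¹ * a₀⁻¹ * (a₀ * s * b₀) = b₀ by group]
    exact mul_mem hb₀ (inv_mem p.1.2.2)⟩
  invFun g := ⟨(⟨a₀ * g, mul_mem ha₀ g.2.1⟩, ⟨(s⁻¹ * g * s)⁻¹ * b₀, mul_mem (inv_mem g.2.2) hb₀⟩),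
    by simp only; group⟩
  left_inv := by
    rintro ⟨⟨⟨a, ha⟩, ⟨b, hb⟩⟩, hab : a * s * b = a₀ * s * b₀⟩
    have hb : (s⁻¹ * (a₀⁻¹ * a) * s)⁻¹ * b₀ = b := by
      rw [show b = s⁻¹ * a⁻¹ * (a * s * b) by group, hab]; group
    ext <;> simp only [mul_inv_cancel_left, hb]
  right_inv g := by ext; simp only [inv_mul_cancel_left]

theorem sum_mul_mul_eq_card_smul_sum_doubleCoset [Fintype Γ₁] [Fintype Γ₂] {M : Type*}
    [AddCommMonoid M] (f : G → M) (s : G) :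
    ∑ p : Γ₁ × Γ₂, f (p.1 * s * p.2)
      = Nat.card {g : G // g ∈ Γ₁ ∧ s⁻¹ * g * s ∈ Γ₂} • ∑ g with g ∈ doubleCoset s Γ₁ Γ₂, f g := by
  have himage : Finset.univ.image (fun p : Γ₁ × Γ₂ => (p.1 : G) * s * p.2)
      = ({g | g ∈ doubleCoset s Γ₁ Γ₂} : Finset G) := by
    ext g
    simp [mem_doubleCoset, eq_comm]
  rw [Finset.sum_comp, himage, Finset.smul_sum]
  refine Finset.sum_congr rfl fun g hg => ?_
  obtain ⟨a₀, ha₀, b₀, hb₀, rfl⟩ := mem_doubleCoset.1 (Finset.mem_filter.1 hg).2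
  rw [← Nat.card_congr (doubleCosetFiberEquiv Γ₁ Γ₂ s ha₀ hb₀), Nat.card_eq_fintype_card,
    Fintype.card_subtype]

theorem sum_doubleCoset_of_mul_right_invariant [Fintype Γ₁] [Fintype Γ₂] {K : Type*} [Field K]
    [CharZero K] (f : G → K) (hf : ∀ g, ∀ b ∈ Γ₂, f (g * b) = f g) (s : G) :
    ∑ g with g ∈ doubleCoset s Γ₁ Γ₂, f g
      = (Nat.card {g : G // g ∈ Γ₁ ∧ s⁻¹ * g * s ∈ Γ₂} : K)⁻¹ *
          (Fintype.card Γ₂ * ∑ a : Γ₁, f (a * s)) := by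
  have hcard : (Nat.card {g : G // g ∈ Γ₁ ∧ s⁻¹ * g * s ∈ Γ₂} : K) ≠ 0 := by
    have : Nonempty {g : G // g ∈ Γ₁ ∧ s⁻¹ * g * s ∈ Γ₂} :=
      ⟨⟨1, one_mem _, by simp⟩⟩
    exact_mod_cast Nat.card_pos.ne'
  have hsum := sum_mul_mul_eq_card_smul_sum_doubleCoset Γ₁ Γ₂ f s
  simp only [Fintype.sum_prod_type, hf _ _ (SetLike.coe_mem _), Finset.sum_const,
    Finset.card_univ, nsmul_eq_mul] at hsum
  rw [eq_inv_mul_iff_mul_eq₀ hcard, ← hsum, Finset.mul_sum]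

end DoubleCosetSums

section ExtendByZero

variable {G : Type*} [Group G]

noncomputable def extendByZero {M : Type*} [Zero M] (Γ : Subgroup G) (φ : Γ → M) (x : G) : M :=
  if h : x ∈ Γ then φ ⟨x, h⟩ else 0

theorem extendByZero_conj {M : Type*} [Zero M] {Γ : Subgroup G} {φ : Γ → M}
    (hφ : ∀ γ δ : Γ, φ (δ * γ * δ⁻¹) = φ γ) {δ : G} (hδ : δ ∈ Γ) (x : G) :
    extendByZero Γ φ (δ * x * δ⁻¹) = extendByZero Γ φ x := by
  by_cases hx : x ∈ Γ
  · rw [extendByZero, dif_pos (mul_mem (mul_mem hδ hx) (inv_mem hδ)), extendByZero, dif_pos hx,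
      ← hφ ⟨x, hx⟩ ⟨δ, hδ⟩]
    rfl
  · rw [extendByZero, dif_neg, extendByZero, dif_neg hx]
    rwa [Γ.mul_mem_cancel_right (inv_mem hδ), Γ.mul_mem_cancel_left hδ]

theorem indCF_eq_sum_extendByZero [Fintype G] (Γ : Subgroup G) [Fintype Γ] (φ : Γ → ℂ) (x : G) :
    indCF Γ φ x = (Fintype.card Γ : ℂ)⁻¹ * ∑ g, extendByZero Γ φ (g⁻¹ * x * g) := by
  rw [indCF, ← Equiv.sum_comp (Equiv.inv G)]
  simp only [Equiv.inv_apply, inv_inv]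
  rfl

end ExtendByZero

/-- Mackey's restriction formula: if `S` is a set of representatives of the double cosets
`Γ₁\G/Γ₂` of a finite group `G`, then for any class function `φ` on `Γ₂` and `γ₁ ∈ Γ₁`,
`(Ind_{Γ₂}^G φ)(γ₁) = ∑_{s ∈ S} (Ind_{Γ₂(s) → Γ₁} φ_s)(γ₁)`, where
`Γ₂(s) = sΓ₂s⁻¹ ∩ Γ₁` and `φ_s(γ) = φ(s⁻¹γs)`. -/
theorem mackey_restriction_formula (G : Type*) [Group G] [Fintype G]
    (Γ₁ Γ₂ : Subgroup G) [Fintype Γ₁] [Fintype Γ₂]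
    (S : Finset G)
    (hS : ∀ g : G, ∃! s, s ∈ S ∧ ∃ a ∈ Γ₁, ∃ b ∈ Γ₂, g = a * s * b)
    (φ : Γ₂ → ℂ) (hφ : ∀ γ δ : Γ₂, φ (δ * γ * δ⁻¹) = φ γ) (γ₁ : Γ₁) :
    indCF Γ₂ φ (↑γ₁)
      = ∑ s ∈ S, (Nat.card {g : G // g ∈ Γ₁ ∧ s⁻¹ * g * s ∈ Γ₂} : ℂ)⁻¹ *
          ∑ y : Γ₁, if h : s⁻¹ * (↑y * ↑γ₁ * (↑y)⁻¹) * s ∈ Γ₂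
            then φ ⟨s⁻¹ * (↑y * ↑γ₁ * (↑y)⁻¹) * s, h⟩ else 0 := by
  set H : G → ℂ := fun g => extendByZero Γ₂ φ (g⁻¹ * γ₁ * g)
  have hH : ∀ g, ∀ b ∈ Γ₂, H (g * b) = H g := fun g b hb => by
    simpa [H, mul_assoc] using extendByZero_conj hφ (inv_mem hb) (g⁻¹ * γ₁ * g)
  have hS' : ∀ g : G, ∃! s, s ∈ S ∧ g ∈ doubleCoset s Γ₁ Γ₂ := by
    simpa only [mem_doubleCoset, SetLike.mem_coe] using hS
  calc indCF Γ₂ φ γ₁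
      = (Fintype.card Γ₂ : ℂ)⁻¹ * ∑ s ∈ S, ∑ g with g ∈ doubleCoset s Γ₁ Γ₂, H g := by
        rw [indCF_eq_sum_extendByZero, sum_eq_sum_sum_doubleCoset Γ₁ Γ₂ hS']
    _ = ∑ s ∈ S, (Nat.card {g : G // g ∈ Γ₁ ∧ s⁻¹ * g * s ∈ Γ₂} : ℂ)⁻¹ *
          ∑ a : Γ₁, H (a * s) := by
        simp only [sum_doubleCoset_of_mul_right_invariant Γ₁ Γ₂ H hH, Finset.mul_sum]
        field_simp
    _ = _ := by
        refine Finset.sum_congr rfl fun s _ => congrArg _ ?_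
        rw [← Equiv.sum_comp (Equiv.inv Γ₁)]
        refine Finset.sum_congr rfl fun a _ => ?_
        simp only [H, Equiv.inv_apply, Subgroup.coe_inv, mul_inv_rev, inv_inv, mul_assoc]
        rfl
end

section
/- The character of an induced representation: if Γ ≤ G are finite groups with coset decomposition G = ⊔_{k=1}^n x_kΓ, and θ is a representation of Γ with character χ_θ, then the character of Ind_Γ^G θ at x equals Σ_{k : x_k⁻¹ x x_k ∈ Γ} χ_θ(x_k⁻¹ x x_k). -/
/-!
Evaluation at the coset representatives `xk k` identifies `Ind_Γ^G θ` with `Fin n → V`, since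
`f (xk k * γ) = θ γ⁻¹ (f (xk k))`. In these coordinates `x` acts by a block monomial matrix:
block `j` of the image is `θ γ⁻¹` applied to block `σ j`, where `x⁻¹ * xk j = xk (σ j) * γ`.
Only the diagonal blocks contribute to the trace, i.e. the `j` with `σ j = j`, which are
exactly those with `(xk j)⁻¹ * x * xk j ∈ Γ`, and there `γ⁻¹ = (xk j)⁻¹ * x * xk j`.
-/

open scoped Classical

/-- The space of the representation of `G` induced by a representation `θ` of a subgroup `Γ`:
functions `f : G → V` with `f (x * γ) = θ γ⁻¹ (f x)`. -/
noncomputable def IndCarrier {G : Type*} [Group G] (Γ : Subgroup G)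
    {V : Type*} [AddCommGroup V] [Module ℂ V] (θ : Representation ℂ Γ V) :
    Submodule ℂ (G → V) where
  carrier := {f | ∀ (x : G) (γ : Γ), f (x * γ) = θ γ⁻¹ (f x)}
  add_mem' := by
    intro a b ha hb x γ
    simp only [Pi.add_apply, ha x γ, hb x γ, map_add]
  zero_mem' := by
    intro x γ
    simp
  smul_mem' := by
    intro c a ha x γ
    simp only [Pi.smul_apply, ha x γ, map_smul]

/-- The representation of `G` induced by a representation `θ` of a subgroup `Γ`, acting by left
translation on `IndCarrier Γ θ`. -/
noncomputable def IndRep {G : Type*} [Group G] (Γ : Subgroup G)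
    {V : Type*} [AddCommGroup V] [Module ℂ V] (θ : Representation ℂ Γ V) :
    Representation ℂ G (IndCarrier Γ θ) where
  toFun x :=
    { toFun := fun f => ⟨fun y => (f : G → V) (x⁻¹ * y), by
        intro y γ
        have h := f.2 (x⁻¹ * y) γ
        simpa [mul_assoc] using h⟩
      map_add' := by
        intro a b
        apply Subtype.ext
        funext y
        rfl
      map_smul' := by
        intro c a
        apply Subtype.ext
        funext y
        rfl }
  map_one' := by
    apply LinearMap.ext; intro f
    apply Subtype.ext; funext y
    simp
  map_mul' := by
    intro a b
    apply LinearMap.ext; intro f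
    apply Subtype.ext; funext y
    show (f : G → V) ((a * b)⁻¹ * y) = (f : G → V) (b⁻¹ * (a⁻¹ * y))
    rw [mul_inv_rev, mul_assoc]

namespace LinearMap

variable {R M ι : Type*} [CommRing R] [AddCommGroup M] [Module R M] [Fintype ι] [DecidableEq ι]

theorem pi_eq_sum_single_comp {N : Type*} [AddCommGroup N] [Module R N]
    (f : ι → N →ₗ[R] M) : pi f = ∑ j, single R (fun _ => M) j ∘ₗ f j := by
  ext v i
  simp [Pi.single_apply]

theorem trace_pi_comp_proj [Module.Free R M] [Module.Finite R M] (σ : ι → ι)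
    (A : ι → M →ₗ[R] M) :
    trace R (ι → M) (pi fun j => A j ∘ₗ proj (σ j))
      = ∑ j, if σ j = j then trace R M (A j) else 0 := by
  rw [pi_eq_sum_single_comp, map_sum]
  refine Finset.sum_congr rfl fun j _ => ?_
  rw [← comp_assoc, trace_comp_comm', ← comp_assoc]
  split_ifs with h
  · rw [h, proj_comp_single_same, id_comp]
  · rw [proj_comp_single_ne R _ _ _ h, zero_comp, map_zero]

end LinearMap

section CosetDecomposition

variable {G : Type*} [Group G] {Γ : Subgroup G} {ι : Type*} {xk : ι → G}
  (hcoset : ∀ g : G, ∃! k : ι, (xk k)⁻¹ * g ∈ Γ)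

noncomputable def cosetIndex (g : G) : ι := (hcoset g).exists.choose

theorem inv_mul_mem_of_cosetIndex (g : G) : (xk (cosetIndex hcoset g))⁻¹ * g ∈ Γ :=
  (hcoset g).exists.choose_spec

theorem cosetIndex_eq_iff {g : G} {k : ι} : cosetIndex hcoset g = k ↔ (xk k)⁻¹ * g ∈ Γ :=
  ⟨fun h => h ▸ inv_mul_mem_of_cosetIndex hcoset g,
    fun h => (hcoset g).unique (inv_mul_mem_of_cosetIndex hcoset g) h⟩

theorem cosetIndex_rep (k : ι) : cosetIndex hcoset (xk k) = k :=
  (cosetIndex_eq_iff hcoset).2 (by simp)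

theorem cosetIndex_mul (g : G) (γ : Γ) : cosetIndex hcoset (g * γ) = cosetIndex hcoset g :=
  (cosetIndex_eq_iff hcoset).2 (by
    simpa [mul_assoc] using Γ.mul_mem (inv_mul_mem_of_cosetIndex hcoset g) γ.2)

noncomputable def cosetOffset (g : G) : Γ :=
  ⟨(xk (cosetIndex hcoset g))⁻¹ * g, inv_mul_mem_of_cosetIndex hcoset g⟩

theorem rep_mul_cosetOffset (g : G) : xk (cosetIndex hcoset g) * cosetOffset hcoset g = g := by
  simp [cosetOffset]

theorem cosetOffset_rep (k : ι) : cosetOffset hcoset (xk k) = 1 := by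
  ext
  simp [cosetOffset, cosetIndex_rep]

theorem cosetOffset_mul (g : G) (γ : Γ) :
    cosetOffset hcoset (g * γ) = cosetOffset hcoset g * γ := by
  ext
  simp [cosetOffset, cosetIndex_mul, mul_assoc]

theorem cosetIndex_inv_mul_rep_eq_iff (x : G) (k : ι) :
    cosetIndex hcoset (x⁻¹ * xk k) = k ↔ (xk k)⁻¹ * x * xk k ∈ Γ := by
  rw [cosetIndex_eq_iff, ← Γ.inv_mem_iff]
  simp [mul_assoc]

theorem cosetOffset_inv_mul_rep_inv {x : G} {k : ι} (h : (xk k)⁻¹ * x * xk k ∈ Γ) :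
    (cosetOffset hcoset (x⁻¹ * xk k))⁻¹ = ⟨(xk k)⁻¹ * x * xk k, h⟩ := by
  ext
  simp [cosetOffset, (cosetIndex_inv_mul_rep_eq_iff hcoset x k).2 h, mul_assoc]

end CosetDecomposition

namespace IndCarrier

variable {G : Type*} [Group G] {Γ : Subgroup G} {V : Type*} [AddCommGroup V] [Module ℂ V]
  {θ : Representation ℂ Γ V} {ι : Type*} {xk : ι → G}
  (hcoset : ∀ g : G, ∃! k : ι, (xk k)⁻¹ * g ∈ Γ)

theorem apply_eq_of_cosetIndex (f : IndCarrier Γ θ) (g : G) :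
    (f : G → V) g = θ (cosetOffset hcoset g)⁻¹ ((f : G → V) (xk (cosetIndex hcoset g))) := by
  conv_lhs => rw [← rep_mul_cosetOffset hcoset g]
  exact f.2 _ _

noncomputable def equivPi : IndCarrier Γ θ ≃ₗ[ℂ] (ι → V) where
  toFun f k := (f : G → V) (xk k)
  map_add' _ _ := rfl
  map_smul' _ _ := rfl
  invFun v := ⟨fun g => θ (cosetOffset hcoset g)⁻¹ (v (cosetIndex hcoset g)), fun g γ => by
    simp only [cosetOffset_mul, cosetIndex_mul, mul_inv_rev, map_mul, Module.End.mul_apply]⟩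
  left_inv f := Subtype.ext <| funext fun g => (apply_eq_of_cosetIndex hcoset f g).symm
  right_inv v := funext fun k => by simp [cosetOffset_rep, cosetIndex_rep]

theorem equivPi_conj_indRep (x : G) :
    (equivPi (θ := θ) hcoset).conj (IndRep Γ θ x) =
      LinearMap.pi fun j => θ (cosetOffset hcoset (x⁻¹ * xk j))⁻¹ ∘ₗ
        LinearMap.proj (cosetIndex hcoset (x⁻¹ * xk j)) := by
  ext v j
  rfl

end IndCarrier

theorem character_of_induced_representation_general (G : Type*) [Group G] (Γ : Subgroup G)
    (V : Type*) [AddCommGroup V] [Module ℂ V] [FiniteDimensional ℂ V]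
    (θ : Representation ℂ Γ V)
    (n : ℕ) (xk : Fin n → G)
    (hcoset : ∀ g : G, ∃! k : Fin n, (xk k)⁻¹ * g ∈ Γ)
    (x : G) :
    LinearMap.trace ℂ (IndCarrier Γ θ) ((IndRep Γ θ) x)
      = ∑ k, if h : (xk k)⁻¹ * x * xk k ∈ Γ
          then LinearMap.trace ℂ V (θ ⟨(xk k)⁻¹ * x * xk k, h⟩) else 0 := by
  rw [← LinearMap.trace_conj' _ (IndCarrier.equivPi hcoset), IndCarrier.equivPi_conj_indRep,
    LinearMap.trace_pi_comp_proj]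
  refine Finset.sum_congr rfl fun k _ => ?_
  by_cases h : (xk k)⁻¹ * x * xk k ∈ Γ
  · rw [dif_pos h, if_pos ((cosetIndex_inv_mul_rep_eq_iff hcoset x k).2 h),
      cosetOffset_inv_mul_rep_inv hcoset h]
  · rw [dif_neg h, if_neg (mt (cosetIndex_inv_mul_rep_eq_iff hcoset x k).1 h)]

/-- The character of an induced representation: if `G = ⊔_k x_k Γ` is a coset decomposition and
`θ` is a representation of `Γ` with character `χ_θ`, then the character of `Ind_Γ^G θ` at `x`
equals `∑_{k : x_k⁻¹ x x_k ∈ Γ} χ_θ (x_k⁻¹ x x_k)`. -/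
theorem character_of_induced_representation (G : Type*) [Group G] [Fintype G] (Γ : Subgroup G)
    (V : Type*) [AddCommGroup V] [Module ℂ V] [FiniteDimensional ℂ V]
    (θ : Representation ℂ Γ V)
    (n : ℕ) (xk : Fin n → G)
    (hcoset : ∀ g : G, ∃! k : Fin n, (xk k)⁻¹ * g ∈ Γ)
    (x : G) :
    LinearMap.trace ℂ (IndCarrier Γ θ) ((IndRep Γ θ) x)
      = ∑ k, if h : (xk k)⁻¹ * x * xk k ∈ Γ
          then LinearMap.trace ℂ V (θ ⟨(xk k)⁻¹ * x * xk k, h⟩) else 0 :=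
  character_of_induced_representation_general G Γ V θ n xk hcoset x
end

section
/- In a locally compact Hausdorff topological group G, if Γ is a discrete subgroup and, for some element γ ∈ Γ, Γ is cocompact in G (G/Γ compact), then the image of the centralizer G_γ in G/Γ is closed and homeomorphic to G_γ/(G_γ ∩ Γ); consequently G_γ/(G_γ ∩ Γ) is compact, i.e., Γ_γ is cocompact in G_γ. -/
/-!
The preimage in `G` of the image of `G_γ` is `G_γ Γ`, the set of `g` with `g⁻¹ γ g` conjugate to
`γ` by an element of `Γ`. That conjugacy class lies in the discrete, hence closed, subgroup `Γ`, so
it is closed, and so is `G_γ Γ`. Its image is then a closed subset of the compact Hausdorff space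
`G / Γ`, hence a Baire space, on which the σ-compact group `G_γ` acts transitively with stabilizer
`Γ_γ`; by the open mapping theorem for such actions the orbit map induces a homeomorphism
`G_γ / Γ_γ ≃ₜ G_γ Γ / Γ`, and compactness transfers along it.
-/

open Set MulAction Pointwise

namespace MulAction

variable {H X : Type*} [Group H] [TopologicalSpace H] [TopologicalSpace X] [MulAction H X]
  [ContinuousSMul H X]

instance continuousSMul_orbit (x : X) : ContinuousSMul H (orbit H x) :=
  ⟨continuous_induced_rng.mpr <| continuous_fst.smul (continuous_subtype_val.comp continuous_snd)⟩

noncomputable def quotientStabilizerHomeomorphOrbit [IsTopologicalGroup H] [SigmaCompactSpace H]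
    [T2Space X] (x : X) [BaireSpace (orbit H x)] : H ⧸ stabilizer H x ≃ₜ orbit H x :=
  have h_comp : (orbitEquivQuotientStabilizer H x).symm ∘ QuotientGroup.mk =
      fun g : H ↦ g • (⟨x, mem_orbit_self x⟩ : orbit H x) := by
    ext g; simp [orbitEquivQuotientStabilizer_symm_apply]
  (orbitEquivQuotientStabilizer H x).symm.toHomeomorphOfContinuousOpen
    (QuotientGroup.isOpenQuotientMap_mk.continuous_comp_iff.mp <| h_comp ▸ by fun_prop)
    (QuotientGroup.isOpenQuotientMap_mk.isOpenMap_iff.mpr <|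
      h_comp ▸ isOpenMap_smul_of_sigmaCompact _)

end MulAction

namespace Subgroup

variable {G : Type*} [Group G]

theorem stabilizer_mk_one_eq_subgroupOf (K Γ : Subgroup G) :
    stabilizer K ((1 : G) : G ⧸ Γ) = Γ.subgroupOf K := by
  ext k
  change (k : G) • ((1 : G) : G ⧸ Γ) = _ ↔ _
  simp [mem_subgroupOf, QuotientGroup.eq]

theorem orbit_mk_one_eq_image (K Γ : Subgroup G) :
    orbit K ((1 : G) : G ⧸ Γ) = QuotientGroup.mk '' (K : Set G) := by
  ext
  simp only [mem_orbit_iff, Subtype.exists, mem_image, SetLike.mem_coe]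
  refine exists_congr fun g ↦ ?_
  change (∃ _ : g ∈ K, (g : G) • ((1 : G) : G ⧸ Γ) = _) ↔ _
  simp

theorem coe_centralizer_mul_eq_preimage_conj (γ : G) (S : Set G) :
    (centralizer {γ} : Set G) * S =
      (fun g ↦ g⁻¹ * γ * g) ⁻¹' ((fun δ ↦ δ⁻¹ * γ * δ) '' S) := by
  ext g
  simp only [mem_mul, mem_preimage, mem_image, SetLike.mem_coe, mem_centralizer_singleton_iff]
  constructor
  · rintro ⟨h, hh, δ, hδ, rfl⟩
    refine ⟨δ, hδ, ?_⟩
    calc δ⁻¹ * γ * δ = δ⁻¹ * (h⁻¹ * (h * γ)) * δ := by group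
      _ = (h * δ)⁻¹ * γ * (h * δ) := by rw [hh]; group
  · rintro ⟨δ, hδ, hconj⟩
    refine ⟨g * δ⁻¹, ?_, δ, hδ, inv_mul_cancel_right g δ⟩
    calc g * δ⁻¹ * γ = g * (δ⁻¹ * γ * δ) * δ⁻¹ := by group
      _ = γ * (g * δ⁻¹) := by rw [hconj]; group

variable [TopologicalSpace G] [IsTopologicalGroup G]

noncomputable def quotientSubgroupOfHomeomorphImage (K Γ : Subgroup G) [IsClosed (Γ : Set G)]
    [SigmaCompactSpace K] [BaireSpace (QuotientGroup.mk '' (K : Set G) : Set (G ⧸ Γ))] :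
    K ⧸ Γ.subgroupOf K ≃ₜ (QuotientGroup.mk '' (K : Set G) : Set (G ⧸ Γ)) :=
  haveI : ContinuousSMul K (G ⧸ Γ) := Subgroup.continuousSMul
  haveI : BaireSpace (orbit K ((1 : G) : G ⧸ Γ)) := by rwa [orbit_mk_one_eq_image]
  stabilizer_mk_one_eq_subgroupOf K Γ ▸
    (quotientStabilizerHomeomorphOrbit _).trans (.setCongr (orbit_mk_one_eq_image K Γ))

variable [T2Space G]

theorem isClosed_of_subset_of_discrete {Γ : Subgroup G} [DiscreteTopology Γ] {A : Set G}
    (hA : A ⊆ Γ) : IsClosed A := by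
  convert (isClosed_of_discrete (H := Γ)).isClosedEmbedding_subtypeVal.isClosedMap _
    (isClosed_discrete ((↑) ⁻¹' A : Set Γ)) using 1
  exact (image_preimage_eq_of_subset (by simpa using hA)).symm

theorem isClosed_image_mk_centralizer (Γ : Subgroup G) [DiscreteTopology Γ] {γ : G}
    (hγ : γ ∈ Γ) : IsClosed (QuotientGroup.mk '' (centralizer {γ} : Set G) : Set (G ⧸ Γ)) := by
  rw [← (QuotientGroup.isQuotientMap_mk Γ).isClosed_preimage,
    QuotientGroup.preimage_image_mk_eq_mul, coe_centralizer_mul_eq_preimage_conj]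
  refine (isClosed_of_subset_of_discrete (Γ := Γ) ?_).preimage (by fun_prop)
  rintro _ ⟨δ, hδ, rfl⟩
  exact mul_mem (mul_mem (inv_mem hδ) hγ) hδ

end Subgroup

/-- In a (second countable) locally compact Hausdorff topological group `G` with a discrete
cocompact subgroup `Γ` and `γ ∈ Γ`, the image of the centralizer `G_γ` in `G/Γ` is closed and
homeomorphic to `G_γ/(G_γ ∩ Γ)`; consequently `G_γ/(G_γ ∩ Γ)` is compact, i.e. `Γ_γ` is
cocompact in `G_γ`. -/
theorem centralizer_image_closed_and_cocompact (G : Type*) [Group G] [TopologicalSpace G]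
    [IsTopologicalGroup G] [LocallyCompactSpace G] [T2Space G] [SecondCountableTopology G]
    (Γ : Subgroup G) [DiscreteTopology Γ] [CompactSpace (G ⧸ Γ)]
    (γ : G) (hγ : γ ∈ Γ) :
    IsClosed ((QuotientGroup.mk '' (Subgroup.centralizer ({γ} : Set G) : Set G)) :
        Set (G ⧸ Γ)) ∧
      Nonempty
        ((↥(Subgroup.centralizer ({γ} : Set G)) ⧸
            Γ.subgroupOf (Subgroup.centralizer ({γ} : Set G))) ≃ₜ
          ((QuotientGroup.mk '' (Subgroup.centralizer ({γ} : Set G) : Set G)) :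
            Set (G ⧸ Γ))) ∧
      CompactSpace
        (↥(Subgroup.centralizer ({γ} : Set G)) ⧸
          Γ.subgroupOf (Subgroup.centralizer ({γ} : Set G))) := by
  set H := Subgroup.centralizer ({γ} : Set G)
  have hX : IsClosed (QuotientGroup.mk '' (H : Set G) : Set (G ⧸ Γ)) :=
    Subgroup.isClosed_image_mk_centralizer Γ hγ
  have : CompactSpace (QuotientGroup.mk '' (H : Set G) : Set (G ⧸ Γ)) :=
    isCompact_iff_compactSpace.mp hX.isCompact
  have : SigmaCompactSpace H := (Set.isClosed_centralizer _).sigmaCompactSpace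
  let e := Subgroup.quotientSubgroupOfHomeomorphImage H Γ
  exact ⟨hX, ⟨e⟩, e.symm.compactSpace⟩
end
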